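/- Relative smoothness of the phase retrieval objective: let f(x) = (1/4m) Σ_{r=1}^m (|⟨a_r, x⟩|² - y_r)² with y_r ≥ 0, and ψ(x) = ‖x‖⁴/4 + ‖x‖²/2. Then for any L ≥ (3/m) Σ_{r=1}^m ‖a_r‖⁴, the function Lψ - f is convex on ℝⁿ; equivalently D_f(x,u) ≤ L D_ψ(x,u) for all x, u. -/

import Mathlib

/-
Along a line `z = x + t • v`, the function `L ψ - f` is a quartic polynomial in `t` with second
derivative `L (2⟪v, z⟫² + (‖z‖² + 1) ‖v‖²) - (1/m) Σ (3⟪a_r, z⟫² - y_r) ⟪a_r, v⟫²`. Dropping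
`y_r ≥ 0` and applying Cauchy–Schwarz to both inner products bounds the `r`-th summand by
`3 ‖a_r‖⁴ ‖z‖² ‖v‖²`, so the choice of `L` makes the second derivative nonnegative and `L ψ - f` is
convex on every line, hence convex. The Bregman inequality is then the first-order
characterization of this convexity, since `D_{Lψ - f} = L D_ψ - D_f`.
-/

open scoped RealInnerProductSpace
open Finset

noncomputable def bregman {n : ℕ} (φ : EuclideanSpace ℝ (Fin n) → ℝ)
    (x u : EuclideanSpace ℝ (Fin n)) : ℝ :=
  φ x - φ u - ⟪gradient φ u, x - u⟫

open Set

theorem convexOn_univ_of_hasDerivAt2_nonneg {g g' g'' : ℝ → ℝ}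
    (hg : ∀ t, HasDerivAt g (g' t) t) (hg' : ∀ t, HasDerivAt g' (g'' t) t)
    (hg'' : ∀ t, 0 ≤ g'' t) : ConvexOn ℝ univ g := by
  have hderiv : deriv g = g' := funext fun t => (hg t).deriv
  refine convexOn_univ_of_deriv2_nonneg (fun t => (hg t).differentiableAt) ?_ fun t => ?_
  · rw [hderiv]; exact fun t => (hg' t).differentiableAt
  · rw [Function.iterate_succ_apply, Function.iterate_one, hderiv, (hg' t).deriv]
    exact hg'' t

theorem convexOn_univ_of_convexOn_line {E : Type*} [AddCommGroup E] [Module ℝ E] {f : E → ℝ}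
    (h : ∀ x v : E, ConvexOn ℝ univ fun t : ℝ => f (x + t • v)) : ConvexOn ℝ univ f := by
  refine ⟨convex_univ, fun p _ q _ μ ν hμ hν hμν => ?_⟩
  have hseg := (h p (q - p)).2 (mem_univ 0) (mem_univ 1) hμ hν hμν
  have hpt : p + ν • (q - p) = μ • p + ν • q := by
    obtain rfl : μ = 1 - ν := by linarith
    module
  simpa [hpt] using hseg

theorem ConvexOn.tangent_le_of_hasFDerivAt {E : Type*} [NormedAddCommGroup E] [NormedSpace ℝ E]
    {G : E → ℝ} (hG : ConvexOn ℝ univ G) {u : E} {D : E →L[ℝ] ℝ} (hD : HasFDerivAt G D u)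
    (x : E) : G u + D (x - u) ≤ G x := by
  have hline : HasDerivAt (G ∘ AffineMap.lineMap (k := ℝ) u x) (D (x - u)) 0 :=
    (AffineMap.lineMap_apply_zero (k := ℝ) u x ▸ hD).comp_hasDerivAt 0 AffineMap.hasDerivAt_lineMap
  have hslope := (hG.comp_affineMap (AffineMap.lineMap u x)).le_slope_of_hasDerivAt
    (mem_univ 0) (mem_univ 1) one_pos hline
  simp only [slope_def_field, Function.comp, AffineMap.lineMap_apply_zero,
    AffineMap.lineMap_apply_one, sub_zero, div_one] at hslope
  linarith

theorem bregman_eq_of_hasFDerivAt {n : ℕ} {φ : EuclideanSpace ℝ (Fin n) → ℝ}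
    {u : EuclideanSpace ℝ (Fin n)} {D : EuclideanSpace ℝ (Fin n) →L[ℝ] ℝ} (h : HasFDerivAt φ D u)
    (x : EuclideanSpace ℝ (Fin n)) : bregman φ x u = φ x - φ u - D (x - u) := by
  rw [bregman, gradient, h.fderiv, InnerProductSpace.toDual_symm_apply]

theorem bregman_le_mul_bregman_of_convexOn_sub {n : ℕ} {f ψ : EuclideanSpace ℝ (Fin n) → ℝ}
    {L : ℝ} (hconv : ConvexOn ℝ univ fun x => L * ψ x - f x) {u : EuclideanSpace ℝ (Fin n)}
    (hf : DifferentiableAt ℝ f u) (hψ : DifferentiableAt ℝ ψ u) (x : EuclideanSpace ℝ (Fin n)) :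
    bregman f x u ≤ L * bregman ψ x u := by
  have htangent := hconv.tangent_le_of_hasFDerivAt
    ((hψ.hasFDerivAt.const_mul L).sub hf.hasFDerivAt) x
  rw [bregman_eq_of_hasFDerivAt hf.hasFDerivAt, bregman_eq_of_hasFDerivAt hψ.hasFDerivAt]
  simp only [sub_apply, smul_apply, smul_eq_mul] at htangent
  linarith

section PhaseRetrieval

variable {E ι : Type*} [NormedAddCommGroup E] [InnerProductSpace ℝ E] [Fintype ι]

noncomputable def quarticKernel (x : E) : ℝ := ‖x‖ ^ 4 / 4 + ‖x‖ ^ 2 / 2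

noncomputable def phaseRetrievalLoss (a : ι → E) (y : ι → ℝ) (m : ℝ) (x : E) : ℝ :=
  1 / (4 * m) * ∑ r, (⟪a r, x⟫ ^ 2 - y r) ^ 2

theorem hasDerivAt_inner_line (a x v : E) (t : ℝ) :
    HasDerivAt (fun t : ℝ => ⟪a, x + t • v⟫) ⟪a, v⟫ t := by
  have h := (((hasDerivAt_id t).smul_const v).const_add x).inner ℝ (hasDerivAt_const t a)
  simpa [real_inner_comm a] using h

theorem hasDerivAt_norm_sq_line (x v : E) (t : ℝ) :
    HasDerivAt (fun t : ℝ => ‖x + t • v‖ ^ 2) (2 * ⟪v, x + t • v⟫) t := by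
  simpa [real_inner_comm v] using (((hasDerivAt_id t).smul_const v).const_add x).norm_sq

theorem hasDerivAt_quarticKernel_line (x v : E) (t : ℝ) :
    HasDerivAt (fun t : ℝ => quarticKernel (x + t • v))
      ((‖x + t • v‖ ^ 2 + 1) * ⟪v, x + t • v⟫) t := by
  have h := hasDerivAt_norm_sq_line x v t
  have hfun : (fun t : ℝ => quarticKernel (x + t • v))
      = fun t : ℝ => (‖x + t • v‖ ^ 2) ^ 2 / 4 + ‖x + t • v‖ ^ 2 / 2 := by
    funext s; simp only [quarticKernel]; ring
  rw [hfun]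
  exact (((h.fun_pow 2).div_const 4).add (h.div_const 2)).congr_deriv (by push_cast; ring)

theorem hasDerivAt_quarticKernel_deriv_line (x v : E) (t : ℝ) :
    HasDerivAt (fun t : ℝ => (‖x + t • v‖ ^ 2 + 1) * ⟪v, x + t • v⟫)
      (2 * ⟪v, x + t • v⟫ ^ 2 + (‖x + t • v‖ ^ 2 + 1) * ‖v‖ ^ 2) t := by
  have h := ((hasDerivAt_norm_sq_line x v t).add_const 1).mul (hasDerivAt_inner_line v x v t)
  rw [real_inner_self_eq_norm_sq] at h
  exact h.congr_deriv (by ring)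

theorem hasDerivAt_sq_residual_line (a x v : E) (c t : ℝ) :
    HasDerivAt (fun t : ℝ => (⟪a, x + t • v⟫ ^ 2 - c) ^ 2)
      (4 * (⟪a, x + t • v⟫ ^ 2 - c) * ⟪a, x + t • v⟫ * ⟪a, v⟫) t := by
  have h := (((hasDerivAt_inner_line a x v t).fun_pow 2).sub_const c).fun_pow 2
  exact h.congr_deriv (by push_cast; ring)

theorem hasDerivAt_sq_residual_deriv_line (a x v : E) (c t : ℝ) :
    HasDerivAt (fun t : ℝ => 4 * (⟪a, x + t • v⟫ ^ 2 - c) * ⟪a, x + t • v⟫ * ⟪a, v⟫)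
      (4 * (3 * ⟪a, x + t • v⟫ ^ 2 - c) * ⟪a, v⟫ ^ 2) t := by
  have hp := hasDerivAt_inner_line a x v t
  have h := ((((hp.fun_pow 2).sub_const c).const_mul 4).mul hp).mul_const ⟪a, v⟫
  exact h.congr_deriv (by push_cast; ring)

theorem residual_hessian_le_kernel_hessian (a z v : E) {c : ℝ} (hc : 0 ≤ c) :
    (3 * ⟪a, z⟫ ^ 2 - c) * ⟪a, v⟫ ^ 2
      ≤ 3 * ‖a‖ ^ 4 * (2 * ⟪v, z⟫ ^ 2 + (‖z‖ ^ 2 + 1) * ‖v‖ ^ 2) := by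
  have hz : ⟪a, z⟫ ^ 2 ≤ ‖a‖ ^ 2 * ‖z‖ ^ 2 := by
    rw [← mul_pow, ← sq_abs]; gcongr; exact abs_real_inner_le_norm a z
  have hv : ⟪a, v⟫ ^ 2 ≤ ‖a‖ ^ 2 * ‖v‖ ^ 2 := by
    rw [← mul_pow, ← sq_abs]; gcongr; exact abs_real_inner_le_norm a v
  calc (3 * ⟪a, z⟫ ^ 2 - c) * ⟪a, v⟫ ^ 2 ≤ 3 * (⟪a, z⟫ ^ 2 * ⟪a, v⟫ ^ 2) := by
        nlinarith [mul_nonneg hc (sq_nonneg ⟪a, v⟫)]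
    _ ≤ 3 * ((‖a‖ ^ 2 * ‖z‖ ^ 2) * (‖a‖ ^ 2 * ‖v‖ ^ 2)) := by gcongr
    _ ≤ 3 * ‖a‖ ^ 4 * (2 * ⟪v, z⟫ ^ 2 + (‖z‖ ^ 2 + 1) * ‖v‖ ^ 2) := by
        nlinarith [mul_nonneg (pow_nonneg (norm_nonneg a) 4) (sq_nonneg ⟪v, z⟫),
          mul_nonneg (pow_nonneg (norm_nonneg a) 4) (sq_nonneg ‖v‖)]

variable (a : ι → E) (y : ι → ℝ) (m L : ℝ)

theorem hasDerivAt_kernel_sub_loss_line (x v : E) (t : ℝ) :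
    HasDerivAt (fun t : ℝ => L * quarticKernel (x + t • v) - phaseRetrievalLoss a y m (x + t • v))
      (L * ((‖x + t • v‖ ^ 2 + 1) * ⟪v, x + t • v⟫)
        - 1 / (4 * m) * ∑ r, 4 * (⟪a r, x + t • v⟫ ^ 2 - y r) * ⟪a r, x + t • v⟫ * ⟪a r, v⟫) t :=
  ((hasDerivAt_quarticKernel_line x v t).const_mul L).sub
    ((HasDerivAt.fun_sum fun r _ => hasDerivAt_sq_residual_line (a r) x v (y r) t).const_mul _)

theorem hasDerivAt_kernel_sub_loss_deriv_line (x v : E) (t : ℝ) :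
    HasDerivAt (fun t : ℝ => L * ((‖x + t • v‖ ^ 2 + 1) * ⟪v, x + t • v⟫)
        - 1 / (4 * m) * ∑ r, 4 * (⟪a r, x + t • v⟫ ^ 2 - y r) * ⟪a r, x + t • v⟫ * ⟪a r, v⟫)
      (L * (2 * ⟪v, x + t • v⟫ ^ 2 + (‖x + t • v‖ ^ 2 + 1) * ‖v‖ ^ 2)
        - 1 / (4 * m) * ∑ r, 4 * (3 * ⟪a r, x + t • v⟫ ^ 2 - y r) * ⟪a r, v⟫ ^ 2) t :=
  ((hasDerivAt_quarticKernel_deriv_line x v t).const_mul L).sub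
    ((HasDerivAt.fun_sum fun r _ =>
      hasDerivAt_sq_residual_deriv_line (a r) x v (y r) t).const_mul _)

theorem differentiable_quarticKernel : Differentiable ℝ (quarticKernel : E → ℝ) := by
  have h : Differentiable ℝ fun x : E => ‖x‖ ^ 2 := differentiable_id.norm_sq ℝ
  have hfun : (quarticKernel : E → ℝ) = fun x => (‖x‖ ^ 2) ^ 2 / 4 + ‖x‖ ^ 2 / 2 := by
    funext x; simp only [quarticKernel]; ring
  rw [hfun]
  fun_prop

theorem differentiable_phaseRetrievalLoss : Differentiable ℝ (phaseRetrievalLoss a y m) := by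
  have h : ∀ r, Differentiable ℝ fun x : E => ⟪a r, x⟫ := fun r =>
    (innerSL ℝ (a r)).differentiable
  unfold phaseRetrievalLoss
  fun_prop

variable {a y m L}

theorem kernel_sub_loss_hessian_nonneg (hy : ∀ r, 0 ≤ y r) (hm : 0 ≤ m)
    (hL : 3 / m * ∑ r, ‖a r‖ ^ 4 ≤ L) (z v : E) :
    0 ≤ L * (2 * ⟪v, z⟫ ^ 2 + (‖z‖ ^ 2 + 1) * ‖v‖ ^ 2)
      - 1 / (4 * m) * ∑ r, 4 * (3 * ⟪a r, z⟫ ^ 2 - y r) * ⟪a r, v⟫ ^ 2 := by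
  set H := 2 * ⟪v, z⟫ ^ 2 + (‖z‖ ^ 2 + 1) * ‖v‖ ^ 2
  have hH : 0 ≤ H := by positivity
  have hsum : ∑ r, (3 * ⟪a r, z⟫ ^ 2 - y r) * ⟪a r, v⟫ ^ 2 ≤ ∑ r, 3 * ‖a r‖ ^ 4 * H :=
    sum_le_sum fun r _ => residual_hessian_le_kernel_hessian (a r) z v (hy r)
  refine sub_nonneg.2 ?_
  calc 1 / (4 * m) * ∑ r, 4 * (3 * ⟪a r, z⟫ ^ 2 - y r) * ⟪a r, v⟫ ^ 2
        = 1 / m * ∑ r, (3 * ⟪a r, z⟫ ^ 2 - y r) * ⟪a r, v⟫ ^ 2 := by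
          simp only [mul_assoc, ← mul_sum]; field_simp
    _ ≤ 1 / m * ∑ r, 3 * ‖a r‖ ^ 4 * H := by gcongr
    _ = (3 / m * ∑ r, ‖a r‖ ^ 4) * H := by rw [← sum_mul, ← mul_sum]; ring
    _ ≤ L * H := by gcongr

theorem convexOn_kernel_sub_loss (hy : ∀ r, 0 ≤ y r) (hm : 0 ≤ m)
    (hL : 3 / m * ∑ r, ‖a r‖ ^ 4 ≤ L) :
    ConvexOn ℝ univ fun x : E => L * quarticKernel x - phaseRetrievalLoss a y m x :=
  convexOn_univ_of_convexOn_line fun x v =>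
    convexOn_univ_of_hasDerivAt2_nonneg (hasDerivAt_kernel_sub_loss_line a y m L x v)
      (hasDerivAt_kernel_sub_loss_deriv_line a y m L x v)
      fun _ => kernel_sub_loss_hessian_nonneg hy hm hL _ v

end PhaseRetrieval

theorem phase_retrieval_relative_smoothness_general {n m : ℕ}
    (a : Fin m → EuclideanSpace ℝ (Fin n)) (y : Fin m → ℝ)
    (hy : ∀ r, 0 ≤ y r) (L : ℝ)
    (hL : (3 / (m : ℝ)) * ∑ r, ‖a r‖ ^ 4 ≤ L) :
    (ConvexOn ℝ Set.univ
      (fun x : EuclideanSpace ℝ (Fin n) =>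
        L * (‖x‖ ^ 4 / 4 + ‖x‖ ^ 2 / 2)
          - (1 / (4 * (m : ℝ))) * ∑ r, (⟪a r, x⟫ ^ 2 - y r) ^ 2)) ∧
    (∀ x u : EuclideanSpace ℝ (Fin n),
      bregman (fun z => (1 / (4 * (m : ℝ))) * ∑ r, (⟪a r, z⟫ ^ 2 - y r) ^ 2) x u
        ≤ L * bregman (fun z => ‖z‖ ^ 4 / 4 + ‖z‖ ^ 2 / 2) x u) := by
  have hconv := convexOn_kernel_sub_loss hy (Nat.cast_nonneg m) hL
  exact ⟨hconv, fun x u => bregman_le_mul_bregman_of_convexOn_sub hconv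
    ((differentiable_phaseRetrievalLoss a y m).differentiableAt)
    differentiable_quarticKernel.differentiableAt x⟩

/-- Relative smoothness of the phase retrieval objective with respect to the
entropy `ψ(x) = ‖x‖⁴/4 + ‖x‖²/2`. -/
theorem phase_retrieval_relative_smoothness {n m : ℕ} (hm : 0 < m)
    (a : Fin m → EuclideanSpace ℝ (Fin n)) (y : Fin m → ℝ)
    (hy : ∀ r, 0 ≤ y r) (L : ℝ)
    (hL : (3 / (m : ℝ)) * ∑ r, ‖a r‖ ^ 4 ≤ L) :
    (ConvexOn ℝ Set.univ
      (fun x : EuclideanSpace ℝ (Fin n) =>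
        L * (‖x‖ ^ 4 / 4 + ‖x‖ ^ 2 / 2)
          - (1 / (4 * (m : ℝ))) * ∑ r, (⟪a r, x⟫ ^ 2 - y r) ^ 2)) ∧
    (∀ x u : EuclideanSpace ℝ (Fin n),
      bregman (fun z => (1 / (4 * (m : ℝ))) * ∑ r, (⟪a r, z⟫ ^ 2 - y r) ^ 2) x u
        ≤ L * bregman (fun z => ‖z‖ ^ 4 / 4 + ‖z‖ ^ 2 / 2) x u) :=
  phase_retrieval_relative_smoothness_general a y hy L hL
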